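/- Let k satisfy 0 < k² < 1. For all real numbers u and v, the function H satisfies the addition formula H(v−u | k) = H(v|k) − H(u|k) + (k²·K'/π) · sn(u/2 | k) · sn(v/2 | k) · sn((v−u)/2 | k). -/

import Mathlib

open Real Filter

/-- Complete elliptic integral of the first kind `K`, as a function of the
squared modulus `m = k²`. -/
noncomputable def ellK (m : ℝ) : ℝ :=
  ∫ τ in (0:ℝ)..(π/2), 1 / Real.sqrt (1 - m * Real.sin τ ^ 2)

/-- The incomplete elliptic integral of the first kind
`φ ↦ ∫₀^φ (1 - k² sin² t)^{-1/2} dt`, as a function of the squared modulus `m = k²`. -/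
noncomputable def amF (m φ : ℝ) : ℝ :=
  ∫ t in (0:ℝ)..φ, 1 / Real.sqrt (1 - m * Real.sin t ^ 2)

/-- Jacobi's amplitude, the inverse of `amF m`, squared modulus `m = k²`. -/
noncomputable def am (m u : ℝ) : ℝ := Function.invFun (amF m) u

/-- Jacobi elliptic function `sn`, squared modulus `m = k²`. -/
noncomputable def sn (u m : ℝ) : ℝ := Real.sin (am m u)

/-- Jacobi elliptic function `cn`, squared modulus `m = k²`. -/
noncomputable def cn (u m : ℝ) : ℝ := Real.cos (am m u)

/-- Jacobi elliptic function `dn`, squared modulus `m = k²`. -/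
noncomputable def dn (u m : ℝ) : ℝ := Real.sqrt (1 - m * sn u m ^ 2)

/-- Jacobi elliptic function `sc = sn/cn`, squared modulus `m = k²`. -/
noncomputable def sc (u m : ℝ) : ℝ := sn u m / cn u m

/-- Jacobi's epsilon function `E(u|k) = ∫₀ᵘ dn(v|k)² dv`, squared modulus `m = k²`. -/
noncomputable def jacobiEps (m u : ℝ) : ℝ := ∫ v in (0:ℝ)..u, (dn v m) ^ 2

/-- The function `H(u|k) = (K'/π)(E(u/2|k) + ((E'-K')/K')·(u/2))`, where
`k' = √(1-k²)`, `K' = K(k')`, `E' = E(K'|k')`. -/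
noncomputable def Hh (k u : ℝ) : ℝ :=
  (ellK (1 - k^2) / π) *
    (jacobiEps (k^2) (u/2) +
      ((jacobiEps (1 - k^2) (ellK (1 - k^2)) - ellK (1 - k^2)) / ellK (1 - k^2)) * (u/2))

/-! Differentiating along the antidiagonal `t ↦ (t, s - t)` shows, as in Euler's proof, that both
`(sn a cn b dn b + sn b cn a dn a) / (1 - m sn² a sn² b)` and
`E(a) + E(b) - m sn a sn b sn (a + b)` depend only on `a + b`; evaluating at `b = 0` gives the
addition theorems for `sn` and for Jacobi's epsilon function. The formula for `H` is the latter at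
`a = u/2`, `b = (v - u)/2`, scaled by `K'/π`; the linear term of `H` is additive. -/

section Amplitude

variable {m : ℝ}

lemma one_sub_mul_pos {p : ℝ} (hm : m < 1) (hp₀ : 0 ≤ p) (hp₁ : p ≤ 1) : 0 < 1 - m * p := by
  rcases le_or_gt 0 m with h | h <;> nlinarith

lemma one_sub_mul_sin_sq_pos (hm : m < 1) (t : ℝ) : 0 < 1 - m * sin t ^ 2 :=
  one_sub_mul_pos hm (sq_nonneg _) (sin_sq_le_one t)

lemma continuous_amF_integrand (hm : m < 1) :
    Continuous fun t => 1 / √(1 - m * sin t ^ 2) :=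
  continuous_const.div (by fun_prop) fun t => (sqrt_pos.2 (one_sub_mul_sin_sq_pos hm t)).ne'

lemma hasDerivAt_amF (hm : m < 1) (φ : ℝ) :
    HasDerivAt (amF m) (1 / √(1 - m * sin φ ^ 2)) φ :=
  intervalIntegral.integral_hasDerivAt_right
    ((continuous_amF_integrand hm).intervalIntegrable _ _)
    ((continuous_amF_integrand hm).stronglyMeasurableAtFilter _ _)
    (continuous_amF_integrand hm).continuousAt

lemma continuous_amF (hm : m < 1) : Continuous (amF m) :=
  continuous_iff_continuousAt.2 fun φ => (hasDerivAt_amF hm φ).continuousAt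

lemma strictMono_amF (hm : m < 1) : StrictMono (amF m) :=
  strictMono_of_deriv_pos fun φ => by
    rw [(hasDerivAt_amF hm φ).deriv]
    have := one_sub_mul_sin_sq_pos hm φ
    positivity

lemma amF_zero : amF m 0 = 0 := intervalIntegral.integral_same

lemma one_div_sqrt_one_add_abs_le (hm : m < 1) (t : ℝ) :
    1 / √(1 + |m|) ≤ 1 / √(1 - m * sin t ^ 2) :=
  one_div_le_one_div_of_le (sqrt_pos.2 (one_sub_mul_sin_sq_pos hm t)) <|
    sqrt_le_sqrt (by nlinarith [neg_abs_le m, abs_nonneg m, sin_sq_le_one t, sq_nonneg (sin t)])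

lemma monotone_amF_sub_div (hm : m < 1) : Monotone fun φ => amF m φ - φ / √(1 + |m|) := by
  have hd (φ : ℝ) : HasDerivAt (fun φ => amF m φ - φ / √(1 + |m|))
      (1 / √(1 - m * sin φ ^ 2) - 1 / √(1 + |m|)) φ :=
    (hasDerivAt_amF hm φ).sub ((hasDerivAt_id' φ).div_const _)
  refine monotone_of_deriv_nonneg (fun φ => (hd φ).differentiableAt) fun φ => ?_
  rw [(hd φ).deriv, sub_nonneg]
  exact one_div_sqrt_one_add_abs_le hm φ

lemma surjective_amF (hm : m < 1) : Function.Surjective (amF m) := by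
  have hc : 0 < √(1 + |m|) := sqrt_pos.2 (by positivity)
  have hmono := monotone_amF_sub_div hm
  refine (continuous_amF hm).surjective ?_ ?_
  · refine tendsto_atTop_mono' _ ?_ (tendsto_id.atTop_div_const hc)
    filter_upwards [eventually_ge_atTop 0] with φ hφ
    simpa [amF_zero] using hmono hφ
  · refine tendsto_atBot_mono' _ ?_ (tendsto_id.atBot_div_const hc)
    filter_upwards [eventually_le_atBot 0] with φ hφ
    simpa [amF_zero] using hmono hφ

lemma amF_am (hm : m < 1) (u : ℝ) : amF m (am m u) = u :=
  Function.rightInverse_invFun (surjective_amF hm) u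

lemma am_eq_orderIso_symm (hm : m < 1) :
    am m = (StrictMono.orderIsoOfSurjective _ (strictMono_amF hm) (surjective_amF hm)).symm := by
  funext u
  apply (strictMono_amF hm).injective
  rw [amF_am hm]
  exact (StrictMono.orderIsoOfSurjective_self_symm_apply _ _ _ u).symm

lemma am_zero (hm : m < 1) : am m 0 = 0 := by
  have : am m (amF m 0) = 0 := Function.leftInverse_invFun (strictMono_amF hm).injective 0
  rwa [amF_zero] at this

lemma continuous_am (hm : m < 1) : Continuous (am m) := by
  rw [am_eq_orderIso_symm hm]
  exact OrderIso.continuous _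

lemma hasDerivAt_am (hm : m < 1) (u : ℝ) : HasDerivAt (am m) (dn u m) u := by
  have h := HasDerivAt.of_local_left_inverse (continuous_am hm).continuousAt
    (hasDerivAt_amF hm (am m u)) (by have := one_sub_mul_sin_sq_pos hm (am m u); positivity)
    (Eventually.of_forall (amF_am hm))
  rw [one_div, inv_inv] at h
  exact h

end Amplitude

section JacobiFunctions

variable {m : ℝ}

lemma sn_sq_add_cn_sq (u : ℝ) : sn u m ^ 2 + cn u m ^ 2 = 1 := sin_sq_add_cos_sq _

lemma one_sub_mul_sn_sq_pos (hm : m < 1) (u : ℝ) : 0 < 1 - m * sn u m ^ 2 :=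
  one_sub_mul_sin_sq_pos hm (am m u)

lemma dn_sq (hm : m < 1) (u : ℝ) : dn u m ^ 2 = 1 - m * sn u m ^ 2 :=
  sq_sqrt (one_sub_mul_sn_sq_pos hm u).le

lemma dn_ne_zero (hm : m < 1) (u : ℝ) : dn u m ≠ 0 :=
  (sqrt_pos.2 (one_sub_mul_sn_sq_pos hm u)).ne'

lemma sn_zero (hm : m < 1) : sn 0 m = 0 := by rw [sn, am_zero hm, sin_zero]

lemma cn_zero (hm : m < 1) : cn 0 m = 1 := by rw [cn, am_zero hm, cos_zero]

lemma dn_zero (hm : m < 1) : dn 0 m = 1 := by simp [dn, sn_zero hm]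

lemma jacobiEps_zero : jacobiEps m 0 = 0 := intervalIntegral.integral_same

lemma continuous_dn (hm : m < 1) : Continuous fun u => dn u m := by
  have := continuous_am hm
  unfold dn sn
  fun_prop

lemma hasDerivAt_sn (hm : m < 1) (u : ℝ) : HasDerivAt (fun u => sn u m) (cn u m * dn u m) u :=
  (hasDerivAt_sin _).comp u (hasDerivAt_am hm u)

lemma hasDerivAt_cn (hm : m < 1) (u : ℝ) :
    HasDerivAt (fun u => cn u m) (-(sn u m * dn u m)) u := by
  have h := (hasDerivAt_cos _).comp u (hasDerivAt_am hm u)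
  rwa [neg_mul] at h

lemma hasDerivAt_dn (hm : m < 1) (u : ℝ) :
    HasDerivAt (fun u => dn u m) (-(m * sn u m * cn u m)) u := by
  have h := (((hasDerivAt_sn hm u).pow 2).const_mul m).const_sub 1 |>.sqrt
    (one_sub_mul_sn_sq_pos hm u).ne'
  refine h.congr_deriv ?_
  change _ / (2 * dn u m) = _
  field_simp [dn_ne_zero hm u]
  ring

lemma hasDerivAt_jacobiEps (hm : m < 1) (u : ℝ) : HasDerivAt (jacobiEps m) (dn u m ^ 2) u :=
  intervalIntegral.integral_hasDerivAt_right
    (((continuous_dn hm).pow 2).intervalIntegrable _ _)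
    (((continuous_dn hm).pow 2).stronglyMeasurableAtFilter _ _)
    ((continuous_dn hm).pow 2).continuousAt

end JacobiFunctions

lemma eq_add_zero_of_hasDerivAt_antidiagonal {G : ℝ → ℝ → ℝ} {a b : ℝ}
    (hG : ∀ x, HasDerivAt (fun t => G t (a + b - t)) 0 x) : G a b = G (a + b) 0 := by
  simpa using is_const_of_deriv_eq_zero (fun x => (hG x).differentiableAt)
    (fun x => (hG x).deriv) a (a + b)

section AdditionTheorems

variable {m : ℝ}

lemma one_sub_mul_sn_sq_mul_sn_sq_pos (hm : m < 1) (a b : ℝ) :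
    0 < 1 - m * sn a m ^ 2 * sn b m ^ 2 := by
  rw [mul_assoc]
  exact one_sub_mul_pos hm (by positivity) (mul_le_one₀ (sin_sq_le_one _) (sq_nonneg _)
    (sin_sq_le_one _))

lemma sn_cn_dn_add_mul_sub (hm : m < 1) (a b : ℝ) :
    (sn a m * cn b m * dn b m + sn b m * cn a m * dn a m) *
        (cn a m * dn a m * sn b m - sn a m * cn b m * dn b m) =
      (sn b m ^ 2 - sn a m ^ 2) * (1 - m * sn a m ^ 2 * sn b m ^ 2) := by
  linear_combination (sn b m ^ 2 * dn a m ^ 2) * sn_sq_add_cn_sq (m := m) a +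
    (sn b m ^ 2 * (1 - sn a m ^ 2)) * dn_sq hm a - (sn a m ^ 2 * dn b m ^ 2) * sn_sq_add_cn_sq b -
    (sn a m ^ 2 * (1 - sn b m ^ 2)) * dn_sq hm b

lemma hasDerivAt_sn_add_numerator_antidiagonal (hm : m < 1) (s x : ℝ) :
    HasDerivAt (fun t => sn t m * cn (s - t) m * dn (s - t) m + sn (s - t) m * cn t m * dn t m)
      (2 * m * sn x m * sn (s - x) m * (sn x m ^ 2 - sn (s - x) m ^ 2)) x := by
  have h := (((hasDerivAt_sn hm x).mul ((hasDerivAt_cn hm _).comp_const_sub s x)).mul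
    ((hasDerivAt_dn hm _).comp_const_sub s x)).add
    ((((hasDerivAt_sn hm _).comp_const_sub s x).mul (hasDerivAt_cn hm x)).mul (hasDerivAt_dn hm x))
  refine h.congr_deriv ?_
  simp only [Pi.mul_apply]
  linear_combination sn x m * sn (s - x) m *
    (m * sn_sq_add_cn_sq (s - x) + dn_sq hm (s - x) - m * sn_sq_add_cn_sq (m := m) x - dn_sq hm x)

lemma hasDerivAt_sn_add_denominator_antidiagonal (hm : m < 1) (s x : ℝ) :
    HasDerivAt (fun t => 1 - m * sn t m ^ 2 * sn (s - t) m ^ 2)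
      (-(2 * m * sn x m * sn (s - x) m *
        (cn x m * dn x m * sn (s - x) m - sn x m * cn (s - x) m * dn (s - x) m))) x := by
  have h := ((((hasDerivAt_sn hm x).pow 2).const_mul m).mul
    (((hasDerivAt_sn hm _).comp_const_sub s x).pow 2)).const_sub 1
  refine h.congr_deriv ?_
  simp only [Pi.pow_apply]
  ring

theorem sn_add (hm : m < 1) (a b : ℝ) :
    sn (a + b) m = (sn a m * cn b m * dn b m + sn b m * cn a m * dn a m) /
      (1 - m * sn a m ^ 2 * sn b m ^ 2) := by
  have hconst := eq_add_zero_of_hasDerivAt_antidiagonal (a := a) (b := b) (G := fun a b =>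
    (sn a m * cn b m * dn b m + sn b m * cn a m * dn a m) / (1 - m * sn a m ^ 2 * sn b m ^ 2))
    fun x => ?_
  · rw [hconst]
    simp [sn_zero hm, cn_zero hm, dn_zero hm]
  refine ((hasDerivAt_sn_add_numerator_antidiagonal hm _ x).div
    (hasDerivAt_sn_add_denominator_antidiagonal hm _ x)
    (one_sub_mul_sn_sq_mul_sn_sq_pos hm _ _).ne').congr_deriv ?_
  rw [div_eq_zero_iff]
  left
  linear_combination (2 * m * sn x m * sn (a + b - x) m) * sn_cn_dn_add_mul_sub hm x (a + b - x)

theorem sn_add_mul_sub (hm : m < 1) (a b : ℝ) :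
    sn (a + b) m * (cn a m * dn a m * sn b m - sn a m * cn b m * dn b m) =
      sn b m ^ 2 - sn a m ^ 2 := by
  rw [sn_add hm, div_mul_eq_mul_div, div_eq_iff (one_sub_mul_sn_sq_mul_sn_sq_pos hm a b).ne']
  exact sn_cn_dn_add_mul_sub hm a b

theorem jacobiEps_add (hm : m < 1) (a b : ℝ) :
    jacobiEps m (a + b) = jacobiEps m a + jacobiEps m b - m * sn a m * sn b m * sn (a + b) m := by
  have hconst := eq_add_zero_of_hasDerivAt_antidiagonal (a := a) (b := b) (G := fun x y =>
    jacobiEps m x + jacobiEps m y - m * sn x m * sn y m * sn (a + b) m) fun x => ?_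
  · rw [hconst]
    simp [sn_zero hm, jacobiEps_zero]
  set s := a + b
  have h := ((hasDerivAt_jacobiEps hm x).add ((hasDerivAt_jacobiEps hm _).comp_const_sub s x)).sub
    ((((hasDerivAt_sn hm x).const_mul m).mul ((hasDerivAt_sn hm _).comp_const_sub s x)).mul_const
      (sn s m))
  refine h.congr_deriv ?_
  have hsub := sn_add_mul_sub hm x (s - x)
  rw [add_sub_cancel] at hsub
  linear_combination dn_sq hm x - dn_sq hm (s - x) - m * hsub

end AdditionTheorems

theorem Hh_addition_formula_general (k : ℝ) (h1 : k ^ 2 < 1) (u v : ℝ) :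
    Hh k (v - u) = Hh k v - Hh k u +
      (k ^ 2 * ellK (1 - k ^ 2) / π) *
        sn (u / 2) (k ^ 2) * sn (v / 2) (k ^ 2) * sn ((v - u) / 2) (k ^ 2) := by
  have h := jacobiEps_add h1 (u / 2) ((v - u) / 2)
  rw [show u / 2 + (v - u) / 2 = v / 2 by ring] at h
  simp only [Hh]
  linear_combination (-(ellK (1 - k ^ 2) / π)) * h

/-- Addition formula for `H`:
`H(v-u) = H(v) - H(u) + (k²K'/π) sn(u/2) sn(v/2) sn((v-u)/2)`. -/
theorem Hh_addition_formula (k : ℝ) (h0 : 0 < k ^ 2) (h1 : k ^ 2 < 1) (u v : ℝ) :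
    Hh k (v - u) = Hh k v - Hh k u +
      (k ^ 2 * ellK (1 - k ^ 2) / π) *
        sn (u / 2) (k ^ 2) * sn (v / 2) (k ^ 2) * sn ((v - u) / 2) (k ^ 2) :=
  Hh_addition_formula_general k h1 u v
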